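/- arXiv:2602.17917 — 6 statements merged into one kernel-verified Lean document; each statement's English description precedes it below -/
import Mathlib

section
/- The Dirichlet tensor product on polynomial functors is closed: for polynomials p, q, define the internal hom [p,q] to be the polynomial whose positions are the polynomial morphisms φ : p → q and whose directions at φ are pairs (i,e) with i : p(1) and e : q[φ₁(i)]. Then there is a natural bijection Poly(r ⊗ p, q) ≅ Poly(r, [p,q]). -/
/-- Morphisms of polynomial functors: forward on positions, backward on directions. -/
def PHom (P Q : PFunctor.{0}) : Type :=
  Σ f : P.A → Q.A, ∀ i : P.A, Q.B (f i) → P.B i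

/-- Identity morphism of polynomials. -/
def pid (P : PFunctor.{0}) : PHom P P := ⟨id, fun _ => id⟩

/-- Composition of morphisms of polynomials. -/
def pcomp {P Q R : PFunctor.{0}} (φ : PHom P Q) (ψ : PHom Q R) : PHom P R :=
  ⟨fun i => ψ.1 (φ.1 i), fun i e => φ.2 i (ψ.2 (φ.1 i) e)⟩

/-- The Dirichlet tensor product of polynomials. -/
def tensP (P Q : PFunctor.{0}) : PFunctor.{0} :=
  ⟨P.A × Q.A, fun ij => P.B ij.1 × Q.B ij.2⟩

/-- The Dirichlet tensor product of morphisms. -/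
def ptens {P P' Q Q' : PFunctor.{0}} (φ : PHom P P') (ψ : PHom Q Q') :
    PHom (tensP P Q) (tensP P' Q') :=
  ⟨fun ij => (φ.1 ij.1, ψ.1 ij.2), fun ij de => (φ.2 ij.1 de.1, ψ.2 ij.2 de.2)⟩

/-- The Dirichlet internal hom polynomial: positions are morphisms `φ : p → q`,
directions at `φ` are pairs `(i, e)` with `i : p(1)` and `e : q[φ₁ i]`. -/
def ihomP (P Q : PFunctor.{0}) : PFunctor.{0} :=
  ⟨∀ i : P.A, Σ j : Q.A, Q.B j → P.B i, fun φ => Σ i : P.A, Q.B (φ i).1⟩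

/-- The Dirichlet tensor product is closed: there is a bijection
`Poly(r ⊗ p, q) ≅ Poly(r, [p,q])`, natural in `r`. -/
theorem dirichlet_closed (P Q : PFunctor.{0}) :
    ∃ e : ∀ R : PFunctor.{0}, PHom (tensP R P) Q ≃ PHom R (ihomP P Q),
      ∀ (R R' : PFunctor.{0}) (f : PHom R' R) (φ : PHom (tensP R P) Q),
        e R' (pcomp (ptens f (pid P)) φ) = pcomp f (e R φ) := by
  refine ⟨fun R => ⟨
    fun φ => ⟨fun k i => ⟨φ.1 (k, i), fun e => (φ.2 (k, i) e).2⟩,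
      fun k ie => (φ.2 (k, ie.1) ie.2).1⟩,
    fun ψ => ⟨fun ki => (ψ.1 ki.1 ki.2).1,
      fun ki e => (ψ.2 ki.1 ⟨ki.2, e⟩, (ψ.1 ki.1 ki.2).2 e)⟩,
    fun φ => rfl, fun ψ => rfl⟩, fun R R' f φ => rfl⟩
end

section
/- For any polynomial functor p, the terminal p-coalgebra νp is isomorphic to the limit of the ℕ-indexed tower of sets defined by A₀ = 1 (a singleton) and A_{n+1} = p(A_n), with projections π₀ : A₁ → A₀ the unique map and π_{n+1} = p(π_n). -/
/-- The tower `A₀ = 1`, `A_{n+1} = p(A_n)`. -/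
def towerA (P : PFunctor.{0}) : ℕ → Type
  | 0 => PUnit
  | n + 1 => P.Obj (towerA P n)

/-- The projections of the tower: `π₀` the unique map, `π_{n+1} = p(π_n)`. -/
def towerProj (P : PFunctor.{0}) : ∀ n : ℕ, towerA P (n + 1) → towerA P n
  | 0, _ => PUnit.unit
  | n + 1, x => P.map (towerProj P n) x

/-!
`P.M` is constructed as the type of sequences of approximations `x n : CofixA P n` with
`Agree (x n) (x (n + 1))`. The level `CofixA P n` is the tower's `Aₙ` written as an inductive
type, `truncate` is `πₙ` under this identification, and `Agree x y` holds exactly when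
`truncate y = x`; so the two sequence types correspond levelwise.
-/

universe u v

open PFunctor PFunctor.Approx

namespace PFunctor

theorem Approx.agree_iff_truncate_eq {F : PFunctor.{u, v}} {n : ℕ} (x : CofixA F n)
    (y : CofixA F (n + 1)) :
    Agree x y ↔ truncate y = x := by
  refine ⟨truncate_eq_of_agree x y, fun h => ?_⟩
  subst h
  induction n with
  | zero => exact agree_trivial
  | succ n ih =>
    cases y with
    | intro a f => exact Agree.intro _ _ fun i => ih (f i)

def M.equivAllAgree (F : PFunctor.{u, v}) : F.M ≃ { x : ∀ n, CofixA F n // AllAgree x } where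
  toFun m := ⟨m.approx, m.consistent⟩
  invFun x := ⟨x.1, x.2⟩
  left_inv _ := rfl
  right_inv _ := rfl

variable (P : PFunctor.{0})

def cofixAEquivTowerA : ∀ n : ℕ, CofixA P n ≃ towerA P n
  | 0 =>
    { toFun := fun _ => PUnit.unit
      invFun := fun _ => CofixA.continue
      left_inv := fun x => by cases x; rfl
      right_inv := fun x => by cases x; rfl }
  | n + 1 =>
    { toFun := fun x => ⟨head' x, fun i => cofixAEquivTowerA n (children' x i)⟩
      invFun := fun x => CofixA.intro x.1 fun i => (cofixAEquivTowerA n).symm (x.2 i)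
      left_inv := fun
        | .intro a f =>
          congrArg (CofixA.intro a) <| funext fun i => (cofixAEquivTowerA n).symm_apply_apply (f i)
      right_inv := fun ⟨a, f⟩ =>
        Sigma.ext rfl <| heq_of_eq <| funext fun i => (cofixAEquivTowerA n).apply_symm_apply (f i) }

theorem towerProj_cofixAEquivTowerA (n : ℕ) (x : CofixA P (n + 1)) :
    towerProj P n (cofixAEquivTowerA P (n + 1) x) = cofixAEquivTowerA P n (truncate x) := by
  induction n with
  | zero => rfl
  | succ n ih =>
    cases x with
    | intro a f =>
      simp only [towerProj, PFunctor.map, truncate, cofixAEquivTowerA]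
      exact congrArg (Sigma.mk a) (funext fun i => ih (f i))

end PFunctor

/-- The terminal `p`-coalgebra (the M-type of `p`) is isomorphic to the limit of the
tower `A₀ = 1`, `A_{n+1} = p(A_n)`: the set of compatible sequences. -/
theorem terminal_coalgebra_is_limit_of_tower (P : PFunctor.{0}) :
    Nonempty (P.M ≃ { x : ∀ n : ℕ, towerA P n // ∀ n : ℕ, towerProj P n (x (n + 1)) = x n }) :=
  ⟨(M.equivAllAgree P).trans <|
    Equiv.subtypeEquiv (Equiv.piCongrRight (cofixAEquivTowerA P)) fun x =>
      forall_congr' fun n => by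
        simp only [Approx.agree_iff_truncate_eq, Equiv.piCongrRight_apply, Pi.map_apply,
          towerProj_cofixAEquivTowerA, EmbeddingLike.apply_eq_iff_eq]⟩
end

section
/- Polynomial trees form a category PolyTr: objects are elements of the terminal (u ◁ u)-coalgebra (coinductive trees whose nodes carry polynomials, with a child tree for each position-direction pair), morphisms from 𝐩 to 𝐪 are coinductively given by a polynomial map between root polynomials together with, for each position i of the root of 𝐩 and each direction e of 𝐪 at the image position (setting j = φ₁(i), d = φ♯ᵢ(e)), a morphism between the child trees 𝐩.rest(i,d) and 𝐪.rest(j,e). Identity and coinductively-defined composition satisfy the category laws. -/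
/-- The universe polynomial composed with itself: positions are codes `(I, D)` for
polynomials, directions are position-direction pairs. -/
abbrev UU : PFunctor.{1} :=
  ⟨Σ I : Type, I → Type, fun a => ULift.{1} (Σ i : a.1, a.2 i)⟩

/-- Polynomial trees: elements of the terminal `(u ◁ u)`-coalgebra. -/
abbrev PolyTree : Type 1 := UU.M

/-- The position set of the root polynomial of a polynomial tree. -/
def PolyTree.pos (p : PolyTree) : Type := p.dest.1.1

/-- The direction set of the root polynomial at position `i`. -/
def PolyTree.dir (p : PolyTree) (i : p.pos) : Type := p.dest.1.2 i

/-- The child tree at a position-direction pair. -/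
def PolyTree.rest (p : PolyTree) {i : p.pos} (d : p.dir i) : PolyTree :=
  p.dest.2 ⟨⟨i, d⟩⟩

/-- The hom tower: `H 0 = 1`, `H (n+1) p q = Π i Σ j Π e Σ d, H n (children)`. -/
def H : ℕ → PolyTree → PolyTree → Type
  | 0, _, _ => PUnit
  | n+1, p, q =>
      ∀ i : p.pos, Σ j : q.pos, ∀ e : q.dir j, Σ d : p.dir i, H n (p.rest d) (q.rest e)

/-- Projection of the hom tower. -/
def projH : ∀ (n : ℕ) (p q : PolyTree), H (n + 1) p q → H n p q
  | 0, _, _, _ => PUnit.unit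
  | n+1, _, _, φ => fun i =>
      ⟨(φ i).1, fun e => ⟨((φ i).2 e).1, projH n _ _ ((φ i).2 e).2⟩⟩

/-- The morphism set of `PolyTr`: the limit of the hom tower. -/
def PTHom (p q : PolyTree) : Type :=
  { f : ∀ n, H n p q // ∀ n, projH n p q (f (n + 1)) = f n }

/-- Levelwise identity morphism. -/
def idH : ∀ (n : ℕ) (p : PolyTree), H n p p
  | 0, _ => PUnit.unit
  | n+1, p => fun i => ⟨i, fun e => ⟨e, idH n (p.rest e)⟩⟩

/-- Levelwise composition of morphisms. -/
def compH : ∀ (n : ℕ) (p q r : PolyTree), H n p q → H n q r → H n p r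
  | 0, _, _, _, _, _ => PUnit.unit
  | n+1, _, _, _, φ, ψ => fun i =>
      ⟨(ψ (φ i).1).1, fun f =>
        ⟨((φ i).2 ((ψ (φ i).1).2 f).1).1,
          compH n _ _ _ ((φ i).2 ((ψ (φ i).1).2 f).1).2 ((ψ (φ i).1).2 f).2⟩⟩


lemma proj_id : ∀ (n : ℕ) (p : PolyTree), projH n p p (idH (n+1) p) = idH n p
  | 0, _ => rfl
  | n+1, p => funext fun i =>
      congrArg (Sigma.mk i) (funext fun e =>
        congrArg (Sigma.mk e) (proj_id n (p.rest e)))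

lemma proj_comp : ∀ (n : ℕ) (p q r : PolyTree) (φ : H (n+1) p q) (ψ : H (n+1) q r),
    projH n p r (compH (n+1) p q r φ ψ)
      = compH n p q r (projH n p q φ) (projH n q r ψ)
  | 0, _, _, _, _, _ => rfl
  | n+1, p, q, r, φ, ψ => funext fun i =>
      congrArg (Sigma.mk _) (funext fun f =>
        congrArg (Sigma.mk _) (proj_comp n _ _ _ _ _))

lemma id_compH : ∀ (n : ℕ) (p q : PolyTree) (φ : H n p q),
    compH n p p q (idH n p) φ = φ
  | 0, _, _, _ => rfl
  | n+1, p, q, φ => funext fun i =>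
      congrArg (Sigma.mk _) (funext fun f =>
        congrArg (Sigma.mk _) (id_compH n _ _ _))

lemma comp_idH : ∀ (n : ℕ) (p q : PolyTree) (φ : H n p q),
    compH n p q q φ (idH n q) = φ
  | 0, _, _, _ => rfl
  | n+1, p, q, φ => funext fun i =>
      congrArg (Sigma.mk _) (funext fun f =>
        congrArg (Sigma.mk _) (comp_idH n _ _ _))

lemma compH_assoc : ∀ (n : ℕ) (p q r s : PolyTree) (φ : H n p q) (ψ : H n q r) (χ : H n r s),
    compH n p r s (compH n p q r φ ψ) χ = compH n p q s φ (compH n q r s ψ χ)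
  | 0, _, _, _, _, _, _, _ => rfl
  | n+1, p, q, r, s, φ, ψ, χ => funext fun i =>
      congrArg (Sigma.mk _) (funext fun f =>
        congrArg (Sigma.mk _) (compH_assoc n _ _ _ _ _ _ _))

/-- Polynomial trees and their coinductively-defined morphisms form a category:
there are identities (levelwise the coinductive identity `idH`) and a composition
(levelwise the coinductive composition `compH`) satisfying unitality and
associativity. -/
theorem polyTr_is_category :
    ∃ (ident : ∀ p : PolyTree, PTHom p p)
      (comp : ∀ p q r : PolyTree, PTHom p q → PTHom q r → PTHom p r),
      (∀ (p : PolyTree) (n : ℕ), (ident p).1 n = idH n p) ∧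
      (∀ (p q r : PolyTree) (φ : PTHom p q) (ψ : PTHom q r) (n : ℕ),
        (comp p q r φ ψ).1 n = compH n p q r (φ.1 n) (ψ.1 n)) ∧
      (∀ (p q : PolyTree) (φ : PTHom p q), comp p p q (ident p) φ = φ) ∧
      (∀ (p q : PolyTree) (φ : PTHom p q), comp p q q φ (ident q) = φ) ∧
      (∀ (p q r s : PolyTree) (φ : PTHom p q) (ψ : PTHom q r) (χ : PTHom r s),
        comp p r s (comp p q r φ ψ) χ = comp p q s φ (comp q r s ψ χ)) := by
  refine ⟨fun p => ⟨fun n => idH n p, fun n => proj_id n p⟩,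
    fun p q r φ ψ => ⟨fun n => compH n p q r (φ.1 n) (ψ.1 n),
      fun n => by rw [proj_comp, φ.2, ψ.2]⟩,
    fun _ _ => rfl, fun _ _ _ _ _ _ => rfl, ?_, ?_, ?_⟩
  · exact fun p q φ => Subtype.ext (funext fun n => id_compH n p q (φ.1 n))
  · exact fun p q φ => Subtype.ext (funext fun n => comp_idH n p q (φ.1 n))
  · exact fun p q r s φ ψ χ => Subtype.ext (funext fun n =>
      compH_assoc n p q r s (φ.1 n) (ψ.1 n) (χ.1 n))
end

section
/- For polynomials p and q (with arities in a fixed universe), the morphism set PolyTr(p̄, q̄) between the corresponding constant polynomial trees is in bijection with the terminal [p,q]-coalgebra, i.e., the set of [p,q]-behavior trees, where [p,q] is the Dirichlet internal hom polynomial. -/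
/-- The constant polynomial tree on a polynomial: the same polynomial at every node. -/
def constTree (P : PFunctor.{0}) : PolyTree :=
  PFunctor.M.corec (fun Q : PFunctor.{0} => ⟨⟨Q.A, Q.B⟩, fun _ => Q⟩) P

/-!
At a constant tree every child is again the same constant tree, and this holds definitionally,
so the stage `H (n+1) p̄ q̄` unfolds to `Π i, Σ j, Π e, Σ d, H n p̄ q̄`. Distributing `Π i Σ j`
over the choice of `e ↦ d` turns this into `Σ (φ : Π i, Σ j, q[j] → p[i]), ([p,q][φ] → H n p̄ q̄)`,
which is the recursion defining the `n+1`-st approximation of the M-type of `[p,q]`. These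
levelwise bijections commute with the projections of the hom tower and the truncations of the
approximations, hence induce a bijection of the limits.
-/

namespace PFunctor

namespace Approx

theorem agree_truncate {F : PFunctor} : ∀ {n : ℕ} (y : CofixA F (n + 1)), Agree (truncate y) y
  | 0, _ => Agree.continu _ _
  | _ + 1, CofixA.intro _ _ => Agree.intro _ _ fun _ => agree_truncate _

end Approx

open Approx

namespace M

variable {F : PFunctor}

def approxLimitEquiv : {x : ∀ n, CofixA F n // ∀ n, truncate (x (n + 1)) = x n} ≃ M F where
  toFun x := ⟨x.1, fun n => x.2 n ▸ agree_truncate _⟩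
  invFun m := ⟨m.approx, truncate_approx m⟩
  left_inv _ := rfl
  right_inv _ := rfl

def towerLimitEquiv {X : ℕ → Type*} (π : ∀ n, X (n + 1) → X n)
    (e : ∀ n, X n ≃ CofixA F n) (he : ∀ n x, truncate (e (n + 1) x) = e n (π n x)) :
    {f : ∀ n, X n // ∀ n, π n (f (n + 1)) = f n} ≃ M F :=
  (Equiv.subtypeEquiv (Equiv.piCongrRight e) fun f => by
    simp only [Equiv.piCongrRight_apply, Pi.map_apply, he, (e _).apply_eq_iff_eq]).trans
    approxLimitEquiv

end M

end PFunctor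

open PFunctor Approx

namespace PolyTree

variable (P Q : PFunctor.{0})

def constHomToCofixA : ∀ n, H n (constTree P) (constTree Q) → CofixA (ihomP P Q) n
  | 0, _ => CofixA.continue
  | n + 1, φ => CofixA.intro (fun i => ⟨(φ i).1, fun e => ((φ i).2 e).1⟩)
      fun x => constHomToCofixA n ((φ x.1).2 x.2).2

def cofixAToConstHom : ∀ n, CofixA (ihomP P Q) n → H n (constTree P) (constTree Q)
  | 0, _ => PUnit.unit
  | n + 1, CofixA.intro a f => fun i =>
      ⟨(a i).1, fun e => ⟨(a i).2 e, cofixAToConstHom n (f ⟨i, e⟩)⟩⟩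

theorem cofixAToConstHom_constHomToCofixA :
    ∀ n φ, cofixAToConstHom P Q n (constHomToCofixA P Q n φ) = φ
  | 0, _ => rfl
  | n + 1, _ => funext fun _ => congrArg (Sigma.mk _) <| funext fun _ =>
      congrArg (Sigma.mk _) <| cofixAToConstHom_constHomToCofixA n _

theorem constHomToCofixA_cofixAToConstHom :
    ∀ n x, constHomToCofixA P Q n (cofixAToConstHom P Q n x) = x
  | 0, CofixA.continue => rfl
  | n + 1, CofixA.intro a _ => congrArg (CofixA.intro a) <| funext fun _ =>
      constHomToCofixA_cofixAToConstHom n _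

def constHomEquivCofixA (n : ℕ) : H n (constTree P) (constTree Q) ≃ CofixA (ihomP P Q) n where
  toFun := constHomToCofixA P Q n
  invFun := cofixAToConstHom P Q n
  left_inv := cofixAToConstHom_constHomToCofixA P Q n
  right_inv := constHomToCofixA_cofixAToConstHom P Q n

theorem truncate_constHomToCofixA : ∀ n φ,
    truncate (constHomToCofixA P Q (n + 1) φ) = constHomToCofixA P Q n (projH n _ _ φ)
  | 0, _ => rfl
  | n + 1, _ => congrArg (CofixA.intro _) <| funext fun _ => truncate_constHomToCofixA n _

end PolyTree

/-- For polynomials `p, q`, the morphism set between the corresponding constant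
polynomial trees is in bijection with the terminal `[p,q]`-coalgebra (the M-type
of the Dirichlet internal hom, i.e. the set of `[p,q]`-behavior trees). -/
theorem constant_tree_hom_is_cofree (P Q : PFunctor.{0}) :
    Nonempty (PTHom (constTree P) (constTree Q) ≃ (ihomP P Q).M) :=
  ⟨M.towerLimitEquiv (X := fun n => H n (constTree P) (constTree Q)) (fun n => projH n _ _)
    (PolyTree.constHomEquivCofixA P Q) (PolyTree.truncate_constHomToCofixA P Q)⟩
end

section
/- The category PolyTr of polynomial trees is monoidal closed for the coinductive tensor product: defining internal hom trees ⟨𝐩,𝐪⟩ as the limit of the tower ⟨𝐩,𝐪⟩⁽⁰⁾ = y and ⟨𝐩,𝐪⟩⁽ⁿ⁺¹⁾ = Π_i Σ_j Π_e Σ_d ⟨𝐩.rest(i,d), 𝐪.rest(j,e)⟩⁽ⁿ⁾ (with Π, Σ interpreted as products and coproducts of polynomials), there is a natural bijection PolyTr(𝐫 ⊗ 𝐩, 𝐪) ≅ PolyTr(𝐫, ⟨𝐩,𝐪⟩). -/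
/-- Tensor product of polynomial trees: Dirichlet product at roots, children
componentwise. -/
def tensTree (p q : PolyTree) : PolyTree :=
  PFunctor.M.corec (fun x : PolyTree × PolyTree =>
    ⟨⟨x.1.pos × x.2.pos, fun ij => x.1.dir ij.1 × x.2.dir ij.2⟩,
      fun de => (x.1.rest de.down.2.1, x.2.rest de.down.2.2)⟩) (p, q)

/-- The internal hom polynomial tree `⟨p,q⟩`: at the root, the Dirichlet internal hom
of the root polynomials (positions `Π i Σ j Π e Σ d`, i.e. root maps; directions pairs
`(i,e)`); the child at `(φ,(i,e))` is `⟨p.rest (i,d), q.rest (j,e)⟩` where `j = φ₁ i`,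
`d = φ♯ᵢ e`. -/
def ihomTree (p q : PolyTree) : PolyTree :=
  PFunctor.M.corec (fun x : PolyTree × PolyTree =>
    ⟨⟨∀ i : x.1.pos, Σ j : x.2.pos, x.2.dir j → x.1.dir i,
      fun φ => Σ i : x.1.pos, x.2.dir (φ i).1⟩,
      fun d => (x.1.rest ((d.down.1 d.down.2.1).2 d.down.2.2), x.2.rest d.down.2.2)⟩)
    (p, q)

def toE : ∀ (n : ℕ) (r p q : PolyTree), H n (tensTree r p) q → H n r (ihomTree p q)
  | 0, _, _, _, _ => PUnit.unit
  | n+1, r, p, q, φ => fun a =>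
      ⟨fun i => ⟨(φ (a, i)).1, fun e => ((φ (a, i)).2 e).1.2⟩,
        fun ie => ⟨((φ (a, ie.1)).2 ie.2).1.1,
          toE n (r.rest ((φ (a, ie.1)).2 ie.2).1.1)
            (p.rest ((φ (a, ie.1)).2 ie.2).1.2) (q.rest ie.2)
            ((φ (a, ie.1)).2 ie.2).2⟩⟩

def invE : ∀ (n : ℕ) (r p q : PolyTree), H n r (ihomTree p q) → H n (tensTree r p) q
  | 0, _, _, _, _ => PUnit.unit
  | n+1, r, p, q, ψ => fun ai =>
      ⟨((ψ ai.1).1 ai.2).1, fun e =>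
        ⟨(((ψ ai.1).2 ⟨ai.2, e⟩).1, ((ψ ai.1).1 ai.2).2 e),
          invE n (r.rest ((ψ ai.1).2 ⟨ai.2, e⟩).1)
            (p.rest (((ψ ai.1).1 ai.2).2 e)) (q.rest e)
            ((ψ ai.1).2 ⟨ai.2, e⟩).2⟩⟩

theorem invE_toE : ∀ (n : ℕ) (r p q : PolyTree) (φ : H n (tensTree r p) q),
    invE n r p q (toE n r p q φ) = φ
  | 0, _, _, _, _ => rfl
  | n+1, r, p, q, φ => funext fun ai =>
      congrArg (Sigma.mk _) (funext fun e =>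
        congrArg (Sigma.mk _)
          (invE_toE n (r.rest ((φ ai).2 e).1.1) (p.rest ((φ ai).2 e).1.2)
            (q.rest e) ((φ ai).2 e).2))

theorem toE_invE : ∀ (n : ℕ) (r p q : PolyTree) (ψ : H n r (ihomTree p q)),
    toE n r p q (invE n r p q ψ) = ψ
  | 0, _, _, _, _ => rfl
  | n+1, r, p, q, ψ => funext fun a =>
      congrArg (Sigma.mk _) (funext fun ie =>
        congrArg (Sigma.mk _)
          (toE_invE n (r.rest ((ψ a).2 ie).1) (p.rest (((ψ a).1 ie.1).2 ie.2))
            (q.rest ie.2) ((ψ a).2 ie).2))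

theorem toE_proj : ∀ (n : ℕ) (r p q : PolyTree) (φ : H (n+1) (tensTree r p) q),
    toE n r p q (projH n _ _ φ) = projH n _ _ (toE (n+1) r p q φ)
  | 0, _, _, _, _ => rfl
  | n+1, r, p, q, φ => funext fun a =>
      congrArg (Sigma.mk _) (funext fun ie =>
        congrArg (Sigma.mk _) (toE_proj n _ _ _ ((φ (a, ie.1)).2 ie.2).2))

theorem compH_proj : ∀ (n : ℕ) (a b c : PolyTree) (φ : H (n+1) a b) (ψ : H (n+1) b c),
    projH n a c (compH (n+1) a b c φ ψ)
      = compH n a b c (projH n a b φ) (projH n b c ψ)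
  | 0, _, _, _, _, _ => rfl
  | n+1, a, b, c, φ, ψ => funext fun i =>
      congrArg (Sigma.mk _) (funext fun f =>
        congrArg (Sigma.mk _) (compH_proj n _ _ _ _ _))

def tensH : ∀ (n : ℕ) (p a b : PolyTree), H n a b → H n (tensTree a p) (tensTree b p)
  | 0, _, _, _, _ => PUnit.unit
  | n+1, p, a, b, f => fun ik =>
      ⟨((f ik.1).1, ik.2), fun e =>
        ⟨(((f ik.1).2 e.1).1, e.2),
          tensH n (p.rest e.2) (a.rest ((f ik.1).2 e.1).1) (b.rest e.1)
            ((f ik.1).2 e.1).2⟩⟩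

theorem tensH_proj : ∀ (n : ℕ) (p a b : PolyTree) (f : H (n+1) a b),
    tensH n p a b (projH n a b f)
      = projH n (tensTree a p) (tensTree b p) (tensH (n+1) p a b f)
  | 0, _, _, _, _ => rfl
  | n+1, p, a, b, f => funext fun ik =>
      congrArg (Sigma.mk _) (funext fun e =>
        congrArg (Sigma.mk _) (tensH_proj n _ _ _ _))

theorem toE_comp : ∀ (n : ℕ) (r' r p q : PolyTree) (f : H n r' r)
    (φ : H n (tensTree r p) q),
    toE n r' p q (compH n (tensTree r' p) (tensTree r p) q (tensH n p r' r f) φ)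
      = compH n r' r (ihomTree p q) f (toE n r p q φ)
  | 0, _, _, _, _, _, _ => rfl
  | n+1, r', r, p, q, f, φ => funext fun a' =>
      congrArg (Sigma.mk _) (funext fun w =>
        congrArg (Sigma.mk _)
          (toE_comp n (r'.rest ((f a').2 ((φ ((f a').1, w.1)).2 w.2).1.1).1)
            (r.rest ((φ ((f a').1, w.1)).2 w.2).1.1)
            (p.rest ((φ ((f a').1, w.1)).2 w.2).1.2) (q.rest w.2)
            ((f a').2 ((φ ((f a').1, w.1)).2 w.2).1.1).2
            ((φ ((f a').1, w.1)).2 w.2).2))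

theorem invE_proj (n : ℕ) (r p q : PolyTree) (ψ : H (n+1) r (ihomTree p q)) :
    invE n r p q (projH n _ _ ψ) = projH n _ _ (invE (n+1) r p q ψ) := by
  conv_lhs => rw [← toE_invE (n+1) r p q ψ, ← toE_proj, invE_toE]

/-- `PolyTr` is monoidal closed for the coinductive tensor: there is a bijection
`PolyTr(r ⊗ p, q) ≅ PolyTr(r, ⟨p,q⟩)`, natural in `r` with respect to the coinductive
composition. -/
theorem polyTr_monoidal_closed (p q : PolyTree) :
    ∃ e : ∀ r : PolyTree, PTHom (tensTree r p) q ≃ PTHom r (ihomTree p q),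
    ∃ (comp : ∀ a b c : PolyTree, PTHom a b → PTHom b c → PTHom a c)
      (tns : ∀ a b : PolyTree, PTHom a b → PTHom (tensTree a p) (tensTree b p)),
      (∀ (a b c : PolyTree) (φ : PTHom a b) (ψ : PTHom b c) (n : ℕ),
        (comp a b c φ ψ).1 n = compH n a b c (φ.1 n) (ψ.1 n)) ∧
      (∀ (r r' : PolyTree) (f : PTHom r' r) (φ : PTHom (tensTree r p) q),
        e r' (comp (tensTree r' p) (tensTree r p) q (tns r' r f) φ) =
          comp r' r (ihomTree p q) f (e r φ)) := by
  refine ⟨fun r =>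
    { toFun := fun φ => ⟨fun n => toE n r p q (φ.1 n), fun n =>
        (toE_proj n r p q (φ.1 (n+1))).symm.trans (congrArg (toE n r p q) (φ.2 n))⟩
      invFun := fun ψ => ⟨fun n => invE n r p q (ψ.1 n), fun n =>
        (invE_proj n r p q (ψ.1 (n+1))).symm.trans (congrArg (invE n r p q) (ψ.2 n))⟩
      left_inv := fun φ => Subtype.ext (funext fun n => invE_toE n r p q (φ.1 n))
      right_inv := fun ψ => Subtype.ext (funext fun n => toE_invE n r p q (ψ.1 n)) },
    fun a b c φ ψ => ⟨fun n => compH n a b c (φ.1 n) (ψ.1 n), fun n => by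
      rw [compH_proj, φ.2, ψ.2]⟩,
    fun a b f => ⟨fun n => tensH n p a b (f.1 n), fun n => by
      rw [← tensH_proj, f.2]⟩,
    fun a b c φ ψ n => rfl,
    fun r r' f φ => Subtype.ext (funext fun n =>
      toE_comp n r' r p q (f.1 n) (φ.1 n))⟩
end

section
/- For the internal hom of polynomial trees, the positions of the internal hom tree recover the morphism set: ⟨𝐩,𝐪⟩(1) ≅ PolyTr(𝐩,𝐪); more precisely, evaluating the internal-hom tower (base case y) at the singleton set yields the morphism tower (base case 1) level by level, so the limits agree. -/
/-- Dependent sum of a family of polynomials. -/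
def sigmaP (A : Type) (P : A → PFunctor.{0}) : PFunctor.{0} :=
  ⟨Σ a : A, (P a).A, fun x => (P x.1).B x.2⟩

/-- Dependent product of a family of polynomials. -/
def piP (A : Type) (P : A → PFunctor.{0}) : PFunctor.{0} :=
  ⟨∀ a : A, (P a).A, fun f => Σ a : A, (P a).B (f a)⟩

/-- The polynomial `y`. -/
def yP : PFunctor.{0} := ⟨PUnit, fun _ => PUnit⟩

/-- The internal-hom tower of polynomials: `⟨p,q⟩⁽⁰⁾ = y` and
`⟨p,q⟩⁽ⁿ⁺¹⁾ = Π i Σ j Π e Σ d ⟨children⟩⁽ⁿ⁾` as polynomials. -/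
def IH : ℕ → PolyTree → PolyTree → PFunctor.{0}
  | 0, _, _ => yP
  | n+1, p, q =>
      piP p.pos fun i => sigmaP q.pos fun j =>
        piP (q.dir j) fun e => sigmaP (p.dir i) fun d => IH n (p.rest d) (q.rest e)

/-- The projections of the internal-hom tower (on positions). -/
def projIH : ∀ (n : ℕ) (p q : PolyTree), (IH (n + 1) p q).A → (IH n p q).A
  | 0, _, _, _ => PUnit.unit
  | n+1, _, _, φ => fun i =>
      ⟨(φ i).1, fun e => ⟨((φ i).2 e).1, projIH n _ _ ((φ i).2 e).2⟩⟩

/-- Levelwise equivalence between internal-hom positions and the hom tower. -/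
def eIH : ∀ (n : ℕ) (p q : PolyTree), (IH n p q).A ≃ H n p q
  | 0, _, _ => Equiv.refl PUnit
  | n+1, p, q =>
      Equiv.piCongrRight fun i =>
        Equiv.sigmaCongrRight fun j =>
          Equiv.piCongrRight fun e =>
            Equiv.sigmaCongrRight fun d => eIH n (p.rest d) (q.rest e)

theorem eIH_comm : ∀ (n : ℕ) (p q : PolyTree) (x : (IH (n + 1) p q).A),
    projH n p q (eIH (n + 1) p q x) = eIH n p q (projIH n p q x)
  | 0, _, _, _ => rfl
  | n+1, p, q, x => funext fun i =>
      congrArg (Sigma.mk ((x i).1)) (funext fun e =>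
        congrArg (Sigma.mk (((x i).2 e).1)) (eIH_comm n _ _ _))

/-- Positions of the internal hom recover the morphism set: evaluating the
internal-hom tower (base case `y`) at the singleton yields the morphism tower
(base case `1`) level by level, compatibly with projections, so the limits agree:
`⟨p,q⟩(1) ≅ PolyTr(p,q)`. -/
theorem ihomTree_positions_are_morphisms (p q : PolyTree) :
    ∃ e : ∀ n : ℕ, (IH n p q).A ≃ H n p q,
      (∀ (n : ℕ) (x : (IH (n + 1) p q).A),
        projH n p q (e (n + 1) x) = e n (projIH n p q x)) ∧
      Nonempty
        ({ x : ∀ n : ℕ, (IH n p q).A // ∀ n : ℕ, projIH n p q (x (n + 1)) = x n } ≃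
          PTHom p q) := by
  refine ⟨fun n => eIH n p q, fun n x => eIH_comm n p q x, ⟨?_⟩⟩
  refine Equiv.subtypeEquiv (Equiv.piCongrRight fun n => eIH n p q) ?_
  intro x
  simp only [Equiv.piCongrRight, Equiv.coe_fn_mk, Pi.map]
  refine forall_congr' fun n => ?_
  rw [eIH_comm n p q (x (n + 1)), (eIH n p q).apply_eq_iff_eq]
end
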